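/- Finiteness of the Cauchy intensity: for every integer n ≥ 2, every real p with 0 < p < n, and every y ∈ ℝⁿ with pairwise distinct coordinates, the Cauchy improper-mixture intensity is finite: λ_{n,p}(y) < ∞. -/

import Mathlib

/-! Let `r` be half the minimal gap between the `yᵢ`. For every `θ₁` at most one `yᵢ` lies within
`r` of `θ₁`, and each of the other `n - 1` Cauchy factors is at most
`min (1 / (π θ₂)) (θ₂ / (π r²))`. Bounding the product by the sum of the factors times this
minimum to the power `n - 1`, and integrating each Cauchy density to `1` in `θ₁`, leaves a
`θ₂`-integrand that is `O(θ₂ ^ (n - 1 - p))` near `0` (integrable since `p < n`) and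
`O(θ₂ ^ (1 - n - p))` near `∞` (integrable since `n - 1 + p > 1`). -/

open MeasureTheory
open scoped ENNReal

/-- The Cauchy improper-mixture intensity
`λ_{n,p}(y) = ∫₀^∞ ∫_{-∞}^∞ ∏ᵢ f(yᵢ; θ₁, θ₂) θ₂^{-p} dθ₁ dθ₂`,
where `f(u; θ₁, θ₂) = θ₂ / (π((u - θ₁)² + θ₂²))` is the Cauchy density. -/
noncomputable def cauchyIntensity (n : ℕ) (p : ℝ) (y : Fin n → ℝ) : ℝ≥0∞ :=
  ∫⁻ θ₂ in Set.Ioi (0 : ℝ), ∫⁻ θ₁ : ℝ,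
    ENNReal.ofReal ((∏ i, θ₂ / (Real.pi * ((y i - θ₁) ^ 2 + θ₂ ^ 2))) * θ₂ ^ (-p))

open Set Real ProbabilityTheory
open scoped NNReal

theorem exists_pos_le_dist_of_injective {ι α : Type*} [Finite ι] [MetricSpace α] {y : ι → α}
    (hy : Function.Injective y) : ∃ δ > 0, ∀ i j, i ≠ j → δ ≤ dist (y i) (y j) := by
  have h : ∀ᶠ δ in nhds (0 : ℝ), ∀ i j, i ≠ j → δ ≤ dist (y i) (y j) := by
    simp only [Filter.eventually_all]
    exact fun i j hij => (eventually_lt_nhds (dist_pos.2 (hy.ne hij))).mono fun _ => le_of_lt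
  exact ((h.filter_mono (nhdsWithin_le_nhds (s := Ioi 0))).and self_mem_nhdsWithin).exists.imp
    fun δ hδ => ⟨hδ.2, hδ.1⟩

theorem exists_forall_ne_le_dist {ι α : Type*} [Nonempty ι] [PseudoMetricSpace α] {y : ι → α}
    {r : ℝ} (hsep : ∀ i j, i ≠ j → 2 * r ≤ dist (y i) (y j)) (x : α) :
    ∃ j, ∀ i, i ≠ j → r ≤ dist (y i) x := by
  by_cases h : ∃ j, dist (y j) x < r
  · obtain ⟨j, hj⟩ := h
    refine ⟨j, fun i hij => ?_⟩
    linarith [hsep i j hij, dist_triangle_right (y i) (y j) x]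
  · push Not at h
    exact ⟨Classical.arbitrary ι, fun i _ => h i⟩

theorem Finset.prod_le_sum_mul_pow_of_forall_ne_le {ι R : Type*} [Fintype ι] [CommSemiring R]
    [PartialOrder R] [IsOrderedRing R] {g : ι → R} {b : R} (hg : ∀ i, 0 ≤ g i) (j : ι)
    (hb : ∀ i, i ≠ j → g i ≤ b) : ∏ i, g i ≤ (∑ i, g i) * b ^ (Fintype.card ι - 1) := by
  classical
  calc ∏ i, g i = g j * ∏ i ∈ univ.erase j, g i := (mul_prod_erase univ g (mem_univ j)).symm
    _ ≤ (∑ i, g i) * ∏ _i ∈ univ.erase j, b :=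
      mul_le_mul (single_le_sum (fun i _ => hg i) (mem_univ j))
        (prod_le_prod (fun i _ => hg i) fun i hi => hb i (ne_of_mem_erase hi))
        (prod_nonneg fun i _ => hg i) (sum_nonneg fun i _ => hg i)
    _ = (∑ i, g i) * b ^ (Fintype.card ι - 1) := by
      rw [prod_const, card_erase_of_mem (mem_univ j), card_univ]

theorem cauchyPDFReal_nonneg (x₀ : ℝ) (γ : ℝ≥0) (x : ℝ) : 0 ≤ cauchyPDFReal x₀ γ x := by
  rw [cauchyPDFReal_def]
  positivity

theorem cauchyPDFReal_toNNReal (x₀ x : ℝ) {γ : ℝ} (hγ : 0 ≤ γ) :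
    cauchyPDFReal x₀ γ.toNNReal x = γ / (π * ((x₀ - x) ^ 2 + γ ^ 2)) := by
  rw [cauchyPDFReal_def, Real.coe_toNNReal γ hγ, sub_sq_comm, div_eq_mul_inv, mul_inv]
  ring

theorem cauchyPDFReal_le_inv_pi_mul (x₀ : ℝ) (γ : ℝ≥0) (x : ℝ) :
    cauchyPDFReal x₀ γ x ≤ (π * γ)⁻¹ := by
  rcases eq_or_ne γ 0 with rfl | hγ
  · simp
  have hγ' : (0 : ℝ) < γ := by positivity
  rw [cauchyPDFReal_def, mul_inv, mul_assoc]
  gcongr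
  rw [← div_eq_mul_inv, div_le_iff₀ (by positivity)]
  field_simp
  nlinarith [sq_nonneg (x - x₀)]

theorem cauchyPDFReal_le_div_of_le_dist (x₀ : ℝ) (γ : ℝ≥0) {x r : ℝ} (hr : 0 < r)
    (h : r ≤ dist x x₀) : cauchyPDFReal x₀ γ x ≤ γ / (π * r ^ 2) := by
  have hr2 : r ^ 2 ≤ (x - x₀) ^ 2 := by
    rw [Real.dist_eq] at h
    simpa [sq_abs] using pow_le_pow_left₀ hr.le h 2
  rw [cauchyPDFReal_def, div_eq_mul_inv, mul_inv, ← mul_assoc, mul_comm _ (γ : ℝ)]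
  gcongr
  nlinarith [sq_nonneg (γ : ℝ)]

noncomputable def cauchyPDFBound (r γ : ℝ) : ℝ := min (π * γ)⁻¹ (γ / (π * r ^ 2))

theorem cauchyPDFReal_le_cauchyPDFBound (x₀ : ℝ) (γ : ℝ≥0) {x r : ℝ} (hr : 0 < r)
    (h : r ≤ dist x x₀) : cauchyPDFReal x₀ γ x ≤ cauchyPDFBound r γ :=
  le_min (cauchyPDFReal_le_inv_pi_mul x₀ γ x) (cauchyPDFReal_le_div_of_le_dist x₀ γ hr h)

theorem cauchyPDFBound_nonneg (r : ℝ) {γ : ℝ} (hγ : 0 ≤ γ) : 0 ≤ cauchyPDFBound r γ :=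
  le_min (by positivity) (by positivity)

theorem prod_cauchyPDFReal_le {ι : Type*} [Fintype ι] [Nonempty ι] {y : ι → ℝ} {r : ℝ}
    (hr : 0 < r) (hsep : ∀ i j, i ≠ j → 2 * r ≤ dist (y i) (y j)) (γ : ℝ≥0) (x : ℝ) :
    ∏ i, cauchyPDFReal (y i) γ x
      ≤ (∑ i, cauchyPDFReal (y i) γ x) * cauchyPDFBound r γ ^ (Fintype.card ι - 1) := by
  obtain ⟨j, hj⟩ := exists_forall_ne_le_dist hsep x
  exact Finset.prod_le_sum_mul_pow_of_forall_ne_le (fun i => cauchyPDFReal_nonneg _ _ _) j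
    fun i hij => cauchyPDFReal_le_cauchyPDFBound _ γ hr (by rw [dist_comm]; exact hj i hij)

theorem lintegral_prod_cauchyPDFReal_mul_le {ι : Type*} [Fintype ι] [Nonempty ι] {y : ι → ℝ}
    {r : ℝ} (hr : 0 < r) (hsep : ∀ i j, i ≠ j → 2 * r ≤ dist (y i) (y j)) {γ : ℝ≥0}
    (hγ : γ ≠ 0) {w : ℝ} (hw : 0 ≤ w) :
    ∫⁻ x, ENNReal.ofReal ((∏ i, cauchyPDFReal (y i) γ x) * w)
      ≤ Fintype.card ι * ENNReal.ofReal (cauchyPDFBound r γ ^ (Fintype.card ι - 1) * w) := by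
  set C := ENNReal.ofReal (cauchyPDFBound r γ ^ (Fintype.card ι - 1) * w)
  calc ∫⁻ x, ENNReal.ofReal ((∏ i, cauchyPDFReal (y i) γ x) * w)
      ≤ ∫⁻ x, (∑ i, cauchyPDF (y i) γ x) * C := lintegral_mono fun x => by
        simp only [cauchyPDF_def, C]
        rw [← ENNReal.ofReal_sum_of_nonneg (fun i _ => cauchyPDFReal_nonneg _ _ _),
          ← ENNReal.ofReal_mul (Finset.sum_nonneg fun i _ => cauchyPDFReal_nonneg _ _ _),
          ← mul_assoc]
        gcongr
        exact prod_cauchyPDFReal_le hr hsep γ x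
      _ = Fintype.card ι * C := by
        rw [lintegral_mul_const _ (by fun_prop), lintegral_finsetSum _ (by fun_prop)]
        simp [lintegral_cauchyPDF_eq_one _ hγ]

theorem cauchyPDFBound_pow_mul_rpow_le_rpow_add (r : ℝ) {γ : ℝ} (hγ : 0 < γ) (k : ℕ) (s : ℝ) :
    cauchyPDFBound r γ ^ k * γ ^ s ≤ (π * r ^ 2)⁻¹ ^ k * γ ^ ((k : ℝ) + s) := by
  calc cauchyPDFBound r γ ^ k * γ ^ s ≤ ((π * r ^ 2)⁻¹ * γ) ^ k * γ ^ s := by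
        gcongr
        · exact cauchyPDFBound_nonneg r hγ.le
        · exact (min_le_right _ _).trans_eq (div_eq_inv_mul _ _)
    _ = (π * r ^ 2)⁻¹ ^ k * γ ^ ((k : ℝ) + s) := by
        rw [mul_pow, mul_assoc, ← rpow_natCast γ k, ← rpow_add hγ]

theorem cauchyPDFBound_pow_mul_rpow_le_rpow_sub (r : ℝ) {γ : ℝ} (hγ : 0 < γ) (k : ℕ) (s : ℝ) :
    cauchyPDFBound r γ ^ k * γ ^ s ≤ π⁻¹ ^ k * γ ^ (s - k) := by
  calc cauchyPDFBound r γ ^ k * γ ^ s ≤ (π⁻¹ * γ⁻¹) ^ k * γ ^ s := by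
        gcongr
        · exact cauchyPDFBound_nonneg r hγ.le
        · exact (min_le_left _ _).trans_eq (mul_inv π γ)
    _ = π⁻¹ ^ k * γ ^ (s - k) := by
        rw [mul_pow, mul_assoc, ← rpow_natCast γ⁻¹ k, inv_rpow hγ.le, ← rpow_neg hγ.le,
          ← rpow_add hγ, neg_add_eq_sub]

theorem setLIntegral_Ioi_zero_lt_top_of_le_rpow {f : ℝ → ℝ} {a b K₁ K₂ : ℝ} (ha : -1 < a)
    (hb : b < -1) (h₀ : ∀ c ∈ Ioc 0 1, f c ≤ K₁ * c ^ a) (h₁ : ∀ c ∈ Ioi 1, f c ≤ K₂ * c ^ b) :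
    ∫⁻ c in Ioi 0, ENNReal.ofReal (f c) < ⊤ := by
  rw [← Ioc_union_Ioi_eq_Ioi zero_le_one,
    lintegral_union measurableSet_Ioi (Ioc_disjoint_Ioi le_rfl)]
  refine ENNReal.add_lt_top.2 ⟨?_, ?_⟩
  · have hint : IntegrableOn (fun c => K₁ * c ^ a) (Ioc 0 1) :=
      ((intervalIntegrable_iff_integrableOn_Ioc_of_le zero_le_one).1
        (intervalIntegral.intervalIntegrable_rpow' ha)).const_mul K₁
    exact (setLIntegral_mono' measurableSet_Ioc fun c hc =>
      ENNReal.ofReal_le_ofReal (h₀ c hc)).trans_lt hint.lintegral_lt_top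
  · have hint : IntegrableOn (fun c => K₂ * c ^ b) (Ioi 1) :=
      (integrableOn_Ioi_rpow_of_lt hb one_pos).const_mul K₂
    exact (setLIntegral_mono' measurableSet_Ioi fun c hc =>
      ENNReal.ofReal_le_ofReal (h₁ c hc)).trans_lt hint.lintegral_lt_top

/-- Finiteness of the Cauchy intensity: for `n ≥ 2`, `0 < p < n` and `y` with
pairwise distinct coordinates, `λ_{n,p}(y) < ∞`. -/
theorem cauchyIntensity_finite (n : ℕ) (hn : 2 ≤ n) (p : ℝ)
    (hp0 : 0 < p) (hpn : p < (n : ℝ)) (y : Fin n → ℝ) (hy : Function.Injective y) :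
    cauchyIntensity n p y < ⊤ := by
  obtain ⟨δ, hδ, hδsep⟩ := exists_pos_le_dist_of_injective hy
  have hsep : ∀ i j, i ≠ j → 2 * (δ / 2) ≤ dist (y i) (y j) := fun i j hij => by
    linarith [hδsep i j hij]
  have : Nonempty (Fin n) := ⟨⟨0, by omega⟩⟩
  have hk : ((n - 1 : ℕ) : ℝ) = n - 1 := by rw [Nat.cast_sub (by omega), Nat.cast_one]
  have hn2 : (2 : ℝ) ≤ n := by exact_mod_cast hn
  have inner : ∀ c ∈ Ioi (0 : ℝ),
      ∫⁻ t, ENNReal.ofReal ((∏ i, c / (π * ((y i - t) ^ 2 + c ^ 2))) * c ^ (-p))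
        ≤ n * ENNReal.ofReal (cauchyPDFBound (δ / 2) c ^ (n - 1) * c ^ (-p)) := by
    intro c (hc : 0 < c)
    have h := lintegral_prod_cauchyPDFReal_mul_le (half_pos hδ) hsep (γ := c.toNNReal)
      (toNNReal_pos.2 hc).ne' (rpow_nonneg hc.le (-p))
    simp_rw [cauchyPDFReal_toNNReal _ _ hc.le, Real.coe_toNNReal _ hc.le, Fintype.card_fin] at h
    exact h
  calc cauchyIntensity n p y
      ≤ ∫⁻ c in Ioi 0, n * ENNReal.ofReal (cauchyPDFBound (δ / 2) c ^ (n - 1) * c ^ (-p)) :=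
        setLIntegral_mono' measurableSet_Ioi inner
    _ = n * ∫⁻ c in Ioi 0, ENNReal.ofReal (cauchyPDFBound (δ / 2) c ^ (n - 1) * c ^ (-p)) :=
        lintegral_const_mul' _ _ (ENNReal.natCast_ne_top n)
    _ < ⊤ := ENNReal.mul_lt_top (ENNReal.natCast_lt_top n)
        (setLIntegral_Ioi_zero_lt_top_of_le_rpow (a := (n - 1 : ℕ) + -p) (b := -p - (n - 1 : ℕ))
          (by rw [hk]; linarith) (by rw [hk]; linarith)
          (fun c hc => cauchyPDFBound_pow_mul_rpow_le_rpow_add _ hc.1 _ _)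
          (fun c hc => cauchyPDFBound_pow_mul_rpow_le_rpow_sub _ (zero_lt_one.trans hc) _ _))
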